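/- There is an isomorphism of categories cΔ ≅ cΔ^op between the cyclic category and its opposite. -/

import Mathlib

/-!
Model `cΔ([n], [m])` by the monotone maps `f : ℤ → ℤ` with `f (x + n + 1) = f x + m + 1`, taken up
to the shift by `m + 1`. Passing to the left adjoint `y ↦ min {x | y ≤ f x}` is a contravariant
endofunctor; composed with the reversal `x ↦ n - x` it becomes an honest involution, because the
reversal exchanges left and right adjoints. On generators it is `s_j ↦ d_{n+1-j}`,
`d_i ↦ s_{n+1-i}` for `i ≥ 1`, `t ↦ t` and `d_0 ↦ s_0 t⁻¹`. So it suffices to check that these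
assignments respect the defining relations and square to the identity on generators; the
involution and its opposite are then inverse to each other.
-/

open CategoryTheory

namespace CyclicOpCat

/-- Generators of the opposite cyclic category `cΔᵒᵖ`:
faces `d n i : [n+1] → [n]` (`i ≤ n+1`), degeneracies `s n i : [n] → [n+1]` (`i ≤ n`),
and the cyclic operator `t n : [n] → [n]`. -/
inductive Gen : ℕ → ℕ → Type
  | d (n i : ℕ) (h : i ≤ n + 1) : Gen (n + 1) n
  | s (n i : ℕ) (h : i ≤ n) : Gen n (n + 1)
  | t (n : ℕ) : Gen n n

instance : Quiver ℕ := ⟨Gen⟩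

abbrev PathCat := Paths ℕ

def pobj (n : ℕ) : PathCat := (Paths.of ℕ).obj n

def pd (n i : ℕ) (h : i ≤ n + 1) : pobj (n + 1) ⟶ pobj n := Quiver.Hom.toPath (Gen.d n i h)
def ps (n i : ℕ) (h : i ≤ n) : pobj n ⟶ pobj (n + 1) := Quiver.Hom.toPath (Gen.s n i h)
def pt (n : ℕ) : pobj n ⟶ pobj n := Quiver.Hom.toPath (Gen.t n)

def ptpow (n : ℕ) : ℕ → (pobj n ⟶ pobj n)
  | 0 => 𝟙 _
  | k + 1 => ptpow n k ≫ pt n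

/-- The defining relations of `cΔᵒᵖ` (composition is written left-to-right, so the
word `d_i d_j`, which applies `d_j` first, is `pd _ j _ ≫ pd _ i _`). -/
inductive Rel : ∀ {X Y : PathCat}, (X ⟶ Y) → (X ⟶ Y) → Prop
  | dd (n i j : ℕ) (hij : i < j) (hj : j ≤ n + 2) :
      Rel (pd (n + 1) j hj ≫ pd n i (by omega))
          (pd (n + 1) i (by omega) ≫ pd n (j - 1) (by omega))
  | ss (n i j : ℕ) (hij : i ≤ j) (hj : j ≤ n) :
      Rel (ps n j hj ≫ ps (n + 1) i (by omega))
          (ps n i (by omega) ≫ ps (n + 1) (j + 1) (by omega))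
  | ds_lt (n i j : ℕ) (hij : i < j) (hj : j ≤ n + 1) :
      Rel (ps (n + 1) j hj ≫ pd (n + 1) i (by omega))
          (pd n i (by omega) ≫ ps n (j - 1) (by omega))
  | ds_eq (n i j : ℕ) (hj : j ≤ n) (hi : i = j ∨ i = j + 1) :
      Rel (ps n j hj ≫ pd n i (by omega)) (𝟙 (pobj n))
  | ds_gt (n i j : ℕ) (hij : j + 1 < i) (hi : i ≤ n + 2) :
      Rel (ps (n + 1) j (by omega) ≫ pd (n + 1) i hi)
          (pd n (i - 1) (by omega) ≫ ps n j (by omega))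
  | tpow (n : ℕ) : Rel (ptpow n (n + 1)) (𝟙 (pobj n))
  | dt (n i : ℕ) (h1 : 1 ≤ i) (h2 : i ≤ n + 1) :
      Rel (pt (n + 1) ≫ pd n i h2) (pd n (i - 1) (by omega) ≫ pt n)
  | st (n i : ℕ) (h1 : 1 ≤ i) (h2 : i ≤ n) :
      Rel (pt n ≫ ps n i h2) (ps n (i - 1) (by omega) ≫ pt (n + 1))

/-- The opposite cyclic category `cΔᵒᵖ`, presented by generators and relations. -/
def relOp : HomRel PathCat := @fun _ _ f g => Rel f g

abbrev CycOp := CategoryTheory.Quotient relOp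

/-- The object `[n]` of `cΔᵒᵖ`. -/
def obj (n : ℕ) : CycOp := (Quotient.functor relOp).obj (pobj n)

/-- The face map `d_i : [n+1] → [n]`. -/
def d (n i : ℕ) (h : i ≤ n + 1) : obj (n + 1) ⟶ obj n := (Quotient.functor relOp).map (pd n i h)

/-- The degeneracy `s_i : [n] → [n+1]`. -/
def s (n i : ℕ) (h : i ≤ n) : obj n ⟶ obj (n + 1) := (Quotient.functor relOp).map (ps n i h)

/-- The cyclic operator `t : [n] → [n]`. -/
def t (n : ℕ) : obj n ⟶ obj n := (Quotient.functor relOp).map (pt n)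

/-- `t^k : [n] → [n]`. -/
def tpow (n k : ℕ) : obj n ⟶ obj n := (Quotient.functor relOp).map (ptpow n k)

end CyclicOpCat

theorem CategoryTheory.Functor.leftOp_comp_eq_id {C : Type*} [Category C] (F : C ⥤ Cᵒᵖ)
    (h : F ⋙ F.leftOp = 𝟭 C) : F.leftOp ⋙ F = 𝟭 Cᵒᵖ :=
  congrArg Functor.op h

namespace CyclicOpCat

lemma map_eq_of_rel {X Y : PathCat} {f g : X ⟶ Y} (h : Rel f g) :
    (Quotient.functor relOp).map f = (Quotient.functor relOp).map g :=
  CategoryTheory.Quotient.sound relOp h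

lemma map_comp_eq_of_rel {X Y Y' Z : PathCat} {f : X ⟶ Y} {g : Y ⟶ Z} {f' : X ⟶ Y'}
    {g' : Y' ⟶ Z} (h : Rel (f ≫ g) (f' ≫ g')) :
    (Quotient.functor relOp).map f ≫ (Quotient.functor relOp).map g =
      (Quotient.functor relOp).map f' ≫ (Quotient.functor relOp).map g' := by
  simpa only [Functor.map_comp] using map_eq_of_rel h

lemma d_congr (n : ℕ) {i j : ℕ} (e : i = j) (h : i ≤ n + 1) : d n i h = d n j (e ▸ h) := by
  subst e; rfl

lemma s_congr (n : ℕ) {i j : ℕ} (e : i = j) (h : i ≤ n) : s n i h = s n j (e ▸ h) := by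
  subst e; rfl

lemma d_comp_d (n i j : ℕ) (hij : i < j) (hj : j ≤ n + 2) :
    d (n + 1) j hj ≫ d n i (by omega) = d (n + 1) i (by omega) ≫ d n (j - 1) (by omega) :=
  map_comp_eq_of_rel (Rel.dd n i j hij hj)

lemma s_comp_s (n i j : ℕ) (hij : i ≤ j) (hj : j ≤ n) :
    s n j hj ≫ s (n + 1) i (by omega) = s n i (by omega) ≫ s (n + 1) (j + 1) (by omega) :=
  map_comp_eq_of_rel (Rel.ss n i j hij hj)

lemma s_comp_d_of_lt (n i j : ℕ) (hij : i < j) (hj : j ≤ n + 1) :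
    s (n + 1) j hj ≫ d (n + 1) i (by omega) = d n i (by omega) ≫ s n (j - 1) (by omega) :=
  map_comp_eq_of_rel (Rel.ds_lt n i j hij hj)

lemma s_comp_d_eq_id (n i j : ℕ) (hj : j ≤ n) (hi : i = j ∨ i = j + 1) :
    s n j hj ≫ d n i (by omega) = 𝟙 (obj n) :=
  ((CategoryTheory.Functor.map_comp _ _ _).symm.trans
    (map_eq_of_rel (Rel.ds_eq n i j hj hi))).trans (CategoryTheory.Functor.map_id _ _)

lemma s_comp_d_of_gt (n i j : ℕ) (hij : j + 1 < i) (hi : i ≤ n + 2) :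
    s (n + 1) j (by omega) ≫ d (n + 1) i hi = d n (i - 1) (by omega) ≫ s n j (by omega) :=
  map_comp_eq_of_rel (Rel.ds_gt n i j hij hi)

lemma t_comp_d (n i : ℕ) (h1 : 1 ≤ i) (h2 : i ≤ n + 1) :
    t (n + 1) ≫ d n i h2 = d n (i - 1) (by omega) ≫ t n :=
  map_comp_eq_of_rel (Rel.dt n i h1 h2)

lemma t_comp_s (n i : ℕ) (h1 : 1 ≤ i) (h2 : i ≤ n) :
    t n ≫ s n i h2 = s n (i - 1) (by omega) ≫ t (n + 1) :=
  map_comp_eq_of_rel (Rel.st n i h1 h2)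

lemma tpow_zero (n : ℕ) : tpow n 0 = 𝟙 (obj n) :=
  (Quotient.functor relOp).map_id _

lemma tpow_succ (n k : ℕ) : tpow n (k + 1) = tpow n k ≫ t n :=
  (Quotient.functor relOp).map_comp _ _

lemma tpow_cycle (n : ℕ) : tpow n (n + 1) = 𝟙 (obj n) :=
  (map_eq_of_rel (Rel.tpow n)).trans ((Quotient.functor relOp).map_id _)

lemma tpow_add (n a b : ℕ) : tpow n (a + b) = tpow n a ≫ tpow n b := by
  induction b with
  | zero => rw [Nat.add_zero, tpow_zero, Category.comp_id]
  | succ b ih => rw [← Nat.add_assoc, tpow_succ, ih, tpow_succ, Category.assoc]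

lemma t_comp_tpow (n k : ℕ) : t n ≫ tpow n k = tpow n (k + 1) := by
  rw [Nat.add_comm, tpow_add, tpow_succ, tpow_zero, Category.id_comp]

lemma t_comp_tpow_self (n : ℕ) : t n ≫ tpow n n = 𝟙 (obj n) := by
  rw [t_comp_tpow, tpow_cycle]

lemma tpow_self_comp_t (n : ℕ) : tpow n n ≫ t n = 𝟙 (obj n) := by
  rw [← tpow_succ, tpow_cycle]

def tIso (n : ℕ) : obj n ≅ obj n := ⟨t n, tpow n n, t_comp_tpow_self n, tpow_self_comp_t n⟩

lemma tpow_comp_d (n k i : ℕ) (hk : k ≤ i) (hi : i ≤ n + 1) :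
    tpow (n + 1) k ≫ d n i hi = d n (i - k) (by omega) ≫ tpow n k := by
  induction k generalizing i with
  | zero => simp only [tpow_zero, Category.id_comp, Category.comp_id, Nat.sub_zero]
  | succ k ih =>
    rw [tpow_succ, Category.assoc, t_comp_d n i (by omega) hi, ← Category.assoc,
      ih (i - 1) (by omega) (by omega), Category.assoc, ← tpow_succ,
      d_congr n (show i - 1 - k = i - (k + 1) by omega)]

lemma tpow_comp_s (n k i : ℕ) (hk : k ≤ i) (hi : i ≤ n) :
    tpow n k ≫ s n i hi = s n (i - k) (by omega) ≫ tpow (n + 1) k := by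
  induction k generalizing i with
  | zero => simp only [tpow_zero, Category.id_comp, Category.comp_id, Nat.sub_zero]
  | succ k ih =>
    rw [tpow_succ, Category.assoc, t_comp_s n i (by omega) hi, ← Category.assoc,
      ih (i - 1) (by omega) (by omega), Category.assoc, ← tpow_succ,
      s_congr n (show i - 1 - k = i - (k + 1) by omega)]

lemma tpow_self_comp_d (n k : ℕ) (hk : k ≤ n) :
    tpow (n + 1) (n + 1) ≫ d n k (by omega) = d n (k + 1) (by omega) ≫ tpow n n :=
  (CommSq.horiz_inv (f := tIso (n + 1)) (i := tIso n)
    ⟨t_comp_d n (k + 1) (by omega) (by omega)⟩).w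

lemma tpow_self_comp_s (n k : ℕ) (hk : k < n) :
    tpow n n ≫ s n k (by omega) = s n (k + 1) (by omega) ≫ tpow (n + 1) (n + 1) :=
  (CommSq.horiz_inv (f := tIso n) (i := tIso (n + 1))
    ⟨t_comp_s n (k + 1) (by omega) (by omega)⟩).w

lemma tpow_self_comp_d_last (n : ℕ) :
    tpow (n + 1) (n + 1) ≫ d n (n + 1) le_rfl = d n 0 (by omega) := by
  rw [tpow_comp_d n (n + 1) (n + 1) le_rfl, tpow_cycle, Category.comp_id,
    d_congr n (Nat.sub_self _)]

/-- `s_0 t⁻¹`, the degeneracy collapsing the edge from the vertex `n` back to the vertex `0`: the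
missing `s_{n+1}`. -/
def sWrap (n : ℕ) : obj n ⟶ obj (n + 1) := s n 0 (Nat.zero_le n) ≫ tpow (n + 1) (n + 1)

lemma t_comp_sWrap (n : ℕ) : t n ≫ sWrap n = s n n le_rfl ≫ t (n + 1) := by
  have wrap : tpow n n ≫ s n n le_rfl = s n 0 (Nat.zero_le n) ≫ tpow (n + 1) n := by
    rw [tpow_comp_s n n n le_rfl, s_congr n (Nat.sub_self n)]
  calc t n ≫ sWrap n = t n ≫ (tpow n n ≫ s n n le_rfl) ≫ t (n + 1) := by
        rw [wrap, sWrap, tpow_succ, Category.assoc]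
    _ = s n n le_rfl ≫ t (n + 1) := by
        rw [← Category.assoc, ← Category.assoc, t_comp_tpow_self, Category.id_comp]

lemma sWrap_comp_s (n k : ℕ) (hk : k ≤ n) :
    sWrap n ≫ s (n + 1) k (by omega) = s n k hk ≫ sWrap (n + 1) := by
  rw [sWrap, Category.assoc, tpow_self_comp_s (n + 1) k (by omega), ← Category.assoc,
    ← s_comp_s n 0 k (Nat.zero_le k) hk, sWrap, Category.assoc]

lemma sWrap_comp_d (n k : ℕ) (hk1 : 1 ≤ k) (hk : k ≤ n + 1) :
    sWrap (n + 1) ≫ d (n + 1) k (by omega) = d n k (by omega) ≫ sWrap n := by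
  rw [sWrap, Category.assoc, tpow_self_comp_d (n + 1) k hk, ← Category.assoc,
    s_comp_d_of_gt n (k + 1) 0 (by omega) (by omega), sWrap, Category.assoc,
    d_congr n (Nat.add_sub_cancel k 1)]

lemma sWrap_comp_d_last (n : ℕ) : sWrap n ≫ d n (n + 1) le_rfl = 𝟙 (obj n) := by
  rw [sWrap, Category.assoc, tpow_self_comp_d_last,
    s_comp_d_eq_id n 0 0 (Nat.zero_le n) (Or.inl rfl)]

lemma sWrap_comp_s_last (n : ℕ) :
    sWrap n ≫ s (n + 1) (n + 1) le_rfl = sWrap n ≫ sWrap (n + 1) := by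
  have s_last :
      s (n + 1) (n + 1) le_rfl = t (n + 1) ≫ sWrap (n + 1) ≫ tpow (n + 2) (n + 2) := by
    rw [← Category.assoc, t_comp_sWrap, Category.assoc, t_comp_tpow_self, Category.comp_id]
  calc sWrap n ≫ s (n + 1) (n + 1) le_rfl
      = s n 0 (Nat.zero_le n) ≫ sWrap (n + 1) ≫ tpow (n + 2) (n + 2) := by
        rw [s_last, sWrap, Category.assoc, ← Category.assoc (tpow _ _), tpow_self_comp_t,
          Category.id_comp]
    _ = sWrap n ≫ sWrap (n + 1) := by
        rw [← Category.assoc, ← sWrap_comp_s n 0 (Nat.zero_le n), Category.assoc]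
        rfl

def dualGen : ∀ {a b : ℕ}, Gen a b → (obj b ⟶ obj a)
  | _, _, .d n 0 _ => sWrap n
  | _, _, .d n (i + 1) _ => s n (n - i) (by omega)
  | _, _, .s n j _ => d n (n + 1 - j) (by omega)
  | _, _, .t n => t n

def dualPrefunctor : ℕ ⥤q CycOpᵒᵖ where
  obj n := Opposite.op (obj n)
  map g := (dualGen g).op

def dualPath : PathCat ⥤ CycOpᵒᵖ := Paths.lift dualPrefunctor

lemma dualPath_map_toPath {a b : ℕ} (g : Gen a b) :
    dualPath.map (Quiver.Hom.toPath g) = (dualGen g).op :=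
  Paths.lift_toPath _ _

lemma dualPath_map_pd_zero (n : ℕ) (h : 0 ≤ n + 1) : dualPath.map (pd n 0 h) = (sWrap n).op :=
  dualPath_map_toPath _

-- The image index `k = n + 1 - i` is an argument so that rewriting produces it in whatever form
-- the relation being checked needs.
lemma dualPath_map_pd (n i : ℕ) (h : i ≤ n + 1) (k : ℕ) (hk : i + k = n + 1) (hi : 0 < i) :
    dualPath.map (pd n i h) = (s n k (by omega)).op := by
  obtain ⟨i, rfl⟩ := Nat.exists_eq_add_one_of_ne_zero hi.ne'
  exact (dualPath_map_toPath (Gen.d n (i + 1) h)).trans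
    (congrArg Quiver.Hom.op (s_congr n (by omega) _))

lemma dualPath_map_ps (n j : ℕ) (h : j ≤ n) (k : ℕ) (hk : j + k = n + 1) :
    dualPath.map (ps n j h) = (d n k (by omega)).op :=
  (dualPath_map_toPath (Gen.s n j h)).trans (congrArg Quiver.Hom.op (d_congr n (by omega) _))

lemma dualPath_map_pt (n : ℕ) : dualPath.map (pt n) = (t n).op :=
  dualPath_map_toPath _

lemma dualPath_map_ptpow (n k : ℕ) : dualPath.map (ptpow n k) = (tpow n k).op := by
  induction k with
  | zero => exact (dualPath.map_id _).trans (congrArg Quiver.Hom.op (tpow_zero n).symm)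
  | succ k ih =>
    rw [ptpow, Functor.map_comp, ih, dualPath_map_pt]
    exact congrArg Quiver.Hom.op (t_comp_tpow n k)

lemma dualPath_map_dd (n i j : ℕ) (hij : i < j) (hj : j ≤ n + 2) :
    dualPath.map (pd (n + 1) j hj ≫ pd n i (by omega)) =
      dualPath.map (pd (n + 1) i (by omega) ≫ pd n (j - 1) (by omega)) := by
  simp only [Functor.map_comp]
  rcases Nat.eq_zero_or_pos i with rfl | hi
  · rw [dualPath_map_pd_zero, dualPath_map_pd_zero]
    rcases Nat.lt_or_ge j 2 with hj1 | hj2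
    · obtain rfl : j = 1 := by omega
      rw [dualPath_map_pd (n + 1) 1 _ (n + 1) (by omega) one_pos]
      exact congrArg Quiver.Hom.op (sWrap_comp_s_last n)
    · rw [dualPath_map_pd (n + 1) j _ (n + 2 - j) (by omega) (by omega),
        dualPath_map_pd n (j - 1) _ (n + 2 - j) (by omega) (by omega)]
      exact congrArg Quiver.Hom.op (sWrap_comp_s n (n + 2 - j) (by omega))
  · rw [dualPath_map_pd n i _ (n + 1 - i) (by omega) hi,
      dualPath_map_pd (n + 1) j _ (n + 2 - j) (by omega) (by omega),
      dualPath_map_pd n (j - 1) _ (n + 2 - j) (by omega) (by omega),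
      dualPath_map_pd (n + 1) i _ (n + 1 - i + 1) (by omega) hi]
    exact congrArg Quiver.Hom.op (s_comp_s n (n + 2 - j) (n + 1 - i) (by omega) (by omega))

lemma dualPath_map_ss (n i j : ℕ) (hij : i ≤ j) (hj : j ≤ n) :
    dualPath.map (ps n j hj ≫ ps (n + 1) i (by omega)) =
      dualPath.map (ps n i (by omega) ≫ ps (n + 1) (j + 1) (by omega)) := by
  simp only [Functor.map_comp]
  rw [dualPath_map_ps n j _ (n + 1 - j) (by omega),
    dualPath_map_ps (n + 1) i _ (n + 2 - i) (by omega),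
    dualPath_map_ps n i _ (n + 2 - i - 1) (by omega),
    dualPath_map_ps (n + 1) (j + 1) _ (n + 1 - j) (by omega)]
  exact congrArg Quiver.Hom.op (d_comp_d n (n + 1 - j) (n + 2 - i) (by omega) (by omega))

lemma dualPath_map_ds_lt (n i j : ℕ) (hij : i < j) (hj : j ≤ n + 1) :
    dualPath.map (ps (n + 1) j hj ≫ pd (n + 1) i (by omega)) =
      dualPath.map (pd n i (by omega) ≫ ps n (j - 1) (by omega)) := by
  simp only [Functor.map_comp]
  rw [dualPath_map_ps (n + 1) j _ (n + 2 - j) (by omega),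
    dualPath_map_ps n (j - 1) _ (n + 2 - j) (by omega)]
  rcases Nat.eq_zero_or_pos i with rfl | hi
  · rw [dualPath_map_pd_zero, dualPath_map_pd_zero]
    exact congrArg Quiver.Hom.op (sWrap_comp_d n (n + 2 - j) (by omega) (by omega))
  · rw [dualPath_map_pd (n + 1) i _ (n + 2 - i) (by omega) hi,
      dualPath_map_pd n i _ (n + 2 - i - 1) (by omega) hi]
    exact congrArg Quiver.Hom.op (s_comp_d_of_lt n (n + 2 - j) (n + 2 - i) (by omega) (by omega))

lemma dualPath_map_ds_eq (n i j : ℕ) (hj : j ≤ n) (hi : i = j ∨ i = j + 1) :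
    dualPath.map (ps n j hj ≫ pd n i (by omega)) = dualPath.map (𝟙 (pobj n)) := by
  rw [Functor.map_comp, CategoryTheory.Functor.map_id, dualPath_map_ps n j _ (n + 1 - j) (by omega)]
  rcases Nat.eq_zero_or_pos i with rfl | hi0
  · obtain rfl : j = 0 := by omega
    rw [dualPath_map_pd_zero]
    exact congrArg Quiver.Hom.op (sWrap_comp_d_last n)
  · rw [dualPath_map_pd n i _ (n + 1 - i) (by omega) hi0]
    exact congrArg Quiver.Hom.op (s_comp_d_eq_id n (n + 1 - j) (n + 1 - i) (by omega) (by omega))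

lemma dualPath_map_ds_gt (n i j : ℕ) (hij : j + 1 < i) (hi : i ≤ n + 2) :
    dualPath.map (ps (n + 1) j (by omega) ≫ pd (n + 1) i hi) =
      dualPath.map (pd n (i - 1) (by omega) ≫ ps n j (by omega)) := by
  simp only [Functor.map_comp]
  rw [dualPath_map_ps (n + 1) j _ (n + 2 - j) (by omega),
    dualPath_map_ps n j _ (n + 2 - j - 1) (by omega),
    dualPath_map_pd (n + 1) i _ (n + 2 - i) (by omega) (by omega),
    dualPath_map_pd n (i - 1) _ (n + 2 - i) (by omega) (by omega)]
  exact congrArg Quiver.Hom.op (s_comp_d_of_gt n (n + 2 - j) (n + 2 - i) (by omega) (by omega))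

lemma dualPath_map_dt (n i : ℕ) (h1 : 1 ≤ i) (h2 : i ≤ n + 1) :
    dualPath.map (pt (n + 1) ≫ pd n i h2) = dualPath.map (pd n (i - 1) (by omega) ≫ pt n) := by
  simp only [Functor.map_comp]
  rw [dualPath_map_pt, dualPath_map_pt, dualPath_map_pd n i _ (n + 2 - i - 1) (by omega) (by omega)]
  rcases Nat.lt_or_ge i 2 with hi1 | hi2
  · obtain rfl : i = 1 := by omega
    rw [dualPath_map_pd_zero]
    exact congrArg Quiver.Hom.op (t_comp_sWrap n).symm
  · rw [dualPath_map_pd n (i - 1) _ (n + 2 - i) (by omega) (by omega)]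
    exact congrArg Quiver.Hom.op (t_comp_s n (n + 2 - i) (by omega) (by omega)).symm

lemma dualPath_map_st (n i : ℕ) (h1 : 1 ≤ i) (h2 : i ≤ n) :
    dualPath.map (pt n ≫ ps n i h2) = dualPath.map (ps n (i - 1) (by omega) ≫ pt (n + 1)) := by
  simp only [Functor.map_comp]
  rw [dualPath_map_pt, dualPath_map_pt, dualPath_map_ps n i _ (n + 2 - i - 1) (by omega),
    dualPath_map_ps n (i - 1) _ (n + 2 - i) (by omega)]
  exact congrArg Quiver.Hom.op (t_comp_d n (n + 2 - i) (by omega) (by omega)).symm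

lemma dualPath_map_eq_of_rel {X Y : PathCat} (f g : X ⟶ Y) (h : relOp f g) :
    dualPath.map f = dualPath.map g := by
  cases h with
  | dd n i j hij hj => exact dualPath_map_dd n i j hij hj
  | ss n i j hij hj => exact dualPath_map_ss n i j hij hj
  | ds_lt n i j hij hj => exact dualPath_map_ds_lt n i j hij hj
  | ds_eq n i j hj hi => exact dualPath_map_ds_eq n i j hj hi
  | ds_gt n i j hij hi => exact dualPath_map_ds_gt n i j hij hi
  | tpow n =>
    rw [dualPath_map_ptpow, tpow_cycle, CategoryTheory.Functor.map_id]
    rfl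
  | dt n i h1 h2 => exact dualPath_map_dt n i h1 h2
  | st n i h1 h2 => exact dualPath_map_st n i h1 h2

def dual : CycOp ⥤ CycOpᵒᵖ :=
  CategoryTheory.Quotient.lift relOp dualPath fun _ _ => dualPath_map_eq_of_rel

lemma dual_map_functor_map {X Y : PathCat} (f : X ⟶ Y) :
    dual.map ((Quotient.functor relOp).map f) = dualPath.map f :=
  CategoryTheory.Quotient.lift_map_functor_map _ _ _ _

lemma unop_dual_map_s (n j : ℕ) (h : j ≤ n) (k : ℕ) (hk : j + k = n + 1) :
    (dual.map (s n j h)).unop = d n k (by omega) :=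
  congrArg Quiver.Hom.unop ((dual_map_functor_map _).trans (dualPath_map_ps n j h k hk))

lemma unop_dual_map_d (n i : ℕ) (h : i ≤ n + 1) (k : ℕ) (hk : i + k = n + 1) (hi : 0 < i) :
    (dual.map (d n i h)).unop = s n k (by omega) :=
  congrArg Quiver.Hom.unop ((dual_map_functor_map _).trans (dualPath_map_pd n i h k hk hi))

lemma unop_dual_map_d_zero (n : ℕ) (h : 0 ≤ n + 1) : (dual.map (d n 0 h)).unop = sWrap n :=
  congrArg Quiver.Hom.unop ((dual_map_functor_map _).trans (dualPath_map_pd_zero n h))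

lemma unop_dual_map_t (n : ℕ) : (dual.map (t n)).unop = t n :=
  congrArg Quiver.Hom.unop ((dual_map_functor_map _).trans (dualPath_map_pt n))

lemma unop_dual_map_tpow (n k : ℕ) : (dual.map (tpow n k)).unop = tpow n k :=
  congrArg Quiver.Hom.unop ((dual_map_functor_map _).trans (dualPath_map_ptpow n k))

lemma unop_dual_map_sWrap (n : ℕ) : (dual.map (sWrap n)).unop = d n 0 (by omega) := by
  rw [sWrap, Functor.map_comp, unop_comp, unop_dual_map_s n 0 _ (n + 1) (by omega)]
  exact (congrArg (· ≫ d n (n + 1) le_rfl) (unop_dual_map_tpow _ _)).trans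
    (tpow_self_comp_d_last n)

-- `rw` does not see through `unop (dual.obj (obj n)) = obj n` in the types, hence `congrArg`.
lemma dual_comp_leftOp_map_d (n i : ℕ) (h : i ≤ n + 1) :
    (dual ⋙ dual.leftOp).map (d n i h) = d n i h := by
  rcases Nat.eq_zero_or_pos i with rfl | hi
  · exact (congrArg (fun f => (dual.map f).unop) (unop_dual_map_d_zero n h)).trans
      (unop_dual_map_sWrap n)
  · exact (congrArg (fun f => (dual.map f).unop)
      (unop_dual_map_d n i h (n + 1 - i) (by omega) hi)).trans
      (unop_dual_map_s n (n + 1 - i) _ i (by omega))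

lemma dual_comp_leftOp_map_s (n j : ℕ) (h : j ≤ n) :
    (dual ⋙ dual.leftOp).map (s n j h) = s n j h :=
  (congrArg (fun f => (dual.map f).unop) (unop_dual_map_s n j h (n + 1 - j) (by omega))).trans
    (unop_dual_map_d n (n + 1 - j) _ j (by omega) (by omega))

lemma dual_comp_leftOp_map_t (n : ℕ) : (dual ⋙ dual.leftOp).map (t n) = t n :=
  (congrArg (fun f => (dual.map f).unop) (unop_dual_map_t n)).trans (unop_dual_map_t n)

theorem dual_comp_leftOp : dual ⋙ dual.leftOp = 𝟭 CycOp := by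
  refine CategoryTheory.Quotient.lift_unique' relOp _ _
    (Paths.ext_functor rfl fun a b (g : Gen a b) => ?_)
  refine Eq.trans ?_ ((Category.id_comp _).trans (Category.comp_id _)).symm
  rcases g with ⟨_, i, h⟩ | ⟨_, j, h⟩ | _
  · exact dual_comp_leftOp_map_d _ i h
  · exact dual_comp_leftOp_map_s _ j h
  · exact dual_comp_leftOp_map_t _

end CyclicOpCat

open CyclicOpCat

/-- There is an isomorphism of categories `cΔ ≅ cΔᵒᵖ` between the cyclic category and its
opposite: there are functors `F : cΔᵒᵖ ⥤ (cΔᵒᵖ)ᵒᵖ = cΔ` and `G` inverse to each other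
(composing to the identity functors on the nose). -/
theorem cyclic_iso_op :
    ∃ (F : CycOp ⥤ CycOpᵒᵖ) (G : CycOpᵒᵖ ⥤ CycOp), F ⋙ G = 𝟭 CycOp ∧ G ⋙ F = 𝟭 CycOpᵒᵖ :=
  ⟨dual, dual.leftOp, dual_comp_leftOp, dual.leftOp_comp_eq_id dual_comp_leftOp⟩
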